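/- Let α > 1/2 and c > 0. For every λ > −(α+1)c^α the improper Riemann integral lim_{R→∞} ∫_{c}^{R} ξ^{1/2} e^{i(λξ + ξ^{α+1})} dξ exists, and it defines a continuous function of λ on the set {λ ∈ ℝ : λ > −(α+1)c^α}. -/

import Mathlib

open MeasureTheory Filter Set Topology Complex

/-!
On `[c, ∞)` the phase `φ ξ = λ ξ + ξ ^ (α + 1)` has derivative `q ξ = λ + (α + 1) ξ ^ α ≥ K ξ ^ α`
for some `K > 0`, uniformly in `λ ≥ L > -(α + 1) c ^ α`. With `u = ξ ^ β / q`, one integration by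
parts gives `ξ ^ β e^{iφ} = (-i u e^{iφ})' + i u' e^{iφ}`. Since `|u| ≤ ξ ^ (β - α) / K → 0` and
`|u'| = O(ξ ^ (β - 1 - α))` is integrable when `β < α`, the truncated integrals converge, and the
same uniform bound lets dominated convergence give continuity in `λ`.
-/

theorem hasDerivAt_neg_I_mul_mul_cexp {u φ : ℝ → ℝ} {u' φ' x : ℝ} (hu : HasDerivAt u u' x)
    (hφ : HasDerivAt φ φ' x) :
    HasDerivAt (fun y => -I * u y * exp (I * φ y))
      (u x * φ' * exp (I * φ x) + -I * u' * exp (I * φ x)) x := by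
  refine ((hu.ofReal_comp.const_mul (-I)).mul (hφ.ofReal_comp.const_mul I).cexp).congr_deriv ?_
  linear_combination (-(u x : ℂ) * φ' * exp (I * φ x)) * I_mul_I

theorem norm_neg_I_mul_mul_cexp (r t : ℝ) : ‖-I * r * exp (I * t)‖ = |r| := by
  simp [norm_exp]

theorem tendsto_intervalIntegral_of_hasDerivAt_add {G g ψ : ℝ → ℂ} {c : ℝ}
    (hG : ∀ x ∈ Ici c, HasDerivAt G (g x + ψ x) x) (hg : ContinuousOn g (Ici c))
    (hψ : IntegrableOn ψ (Ioi c)) (hG_lim : Tendsto G atTop (𝓝 0)) :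
    Tendsto (fun R => ∫ x in c..R, g x) atTop (𝓝 (-G c - ∫ x in Ioi c, ψ x)) := by
  have hFTC : ∀ R ≥ c, ∫ x in c..R, g x = G R - G c - ∫ x in c..R, ψ x := by
    intro R hR
    have hsub : uIcc c R ⊆ Ici c := by rw [uIcc_of_le hR]; exact Icc_subset_Ici_self
    have hgi : IntervalIntegrable g volume c R := (hg.mono hsub).intervalIntegrable
    have hψi : IntervalIntegrable ψ volume c R :=
      (intervalIntegrable_iff_integrableOn_Ioc_of_le hR).2 (hψ.mono_set Ioc_subset_Ioi_self)
    rw [← intervalIntegral.integral_eq_sub_of_hasDerivAt (fun x hx => hG x (hsub hx))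
      (hgi.add hψi), intervalIntegral.integral_add hgi hψi]
    ring
  have hlim := (hG_lim.sub_const (G c)).sub (intervalIntegral_tendsto_integral_Ioi c hψ tendsto_id)
  rw [zero_sub] at hlim
  exact hlim.congr' ((eventually_ge_atTop c).mono fun R hR => (hFTC R hR).symm)

namespace OscillatoryIntegral

variable (α β l : ℝ)

noncomputable def phase (ξ : ℝ) : ℝ := l * ξ + ξ ^ (α + 1)

noncomputable def phaseDeriv (ξ : ℝ) : ℝ := l + (α + 1) * ξ ^ α

noncomputable def amp (ξ : ℝ) : ℝ := ξ ^ β / phaseDeriv α l ξ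

noncomputable def ampDeriv (ξ : ℝ) : ℝ :=
  (β * ξ ^ (β - 1) * phaseDeriv α l ξ - ξ ^ β * ((α + 1) * (α * ξ ^ (α - 1)))) /
    phaseDeriv α l ξ ^ 2

noncomputable def boundaryTerm (ξ : ℝ) : ℂ := -I * amp α β l ξ * exp (I * phase α l ξ)

noncomputable def remainder (ξ : ℝ) : ℂ := -I * ampDeriv α β l ξ * exp (I * phase α l ξ)

noncomputable def tail (c l : ℝ) : ℂ :=
  -boundaryTerm α β l c - ∫ ξ in Ioi c, remainder α β l ξ

variable {α β l}

theorem hasDerivAt_phase {ξ : ℝ} (hξ : 0 < ξ) : HasDerivAt (phase α l) (phaseDeriv α l ξ) ξ := by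
  refine (((hasDerivAt_id ξ).const_mul l).add
    (Real.hasDerivAt_rpow_const (p := α + 1) (Or.inl hξ.ne'))).congr_deriv ?_
  simp [phaseDeriv]

theorem hasDerivAt_amp {ξ : ℝ} (hξ : 0 < ξ) (hq : phaseDeriv α l ξ ≠ 0) :
    HasDerivAt (amp α β l) (ampDeriv α β l ξ) ξ := by
  have hq' : HasDerivAt (phaseDeriv α l) ((α + 1) * (α * ξ ^ (α - 1))) ξ :=
    ((Real.hasDerivAt_rpow_const (Or.inl hξ.ne')).const_mul (α + 1)).const_add l
  exact (Real.hasDerivAt_rpow_const (Or.inl hξ.ne')).div hq' hq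

theorem hasDerivAt_boundaryTerm {ξ : ℝ} (hξ : 0 < ξ) (hq : phaseDeriv α l ξ ≠ 0) :
    HasDerivAt (boundaryTerm α β l)
      (((ξ ^ β : ℝ) : ℂ) * exp (I * phase α l ξ) + remainder α β l ξ) ξ := by
  have h := hasDerivAt_neg_I_mul_mul_cexp (hasDerivAt_amp (β := β) hξ hq)
    (hasDerivAt_phase (α := α) (l := l) hξ)
  rwa [amp, ← ofReal_mul, div_mul_cancel₀ _ hq] at h

theorem phaseDeriv_pos (hα : 0 ≤ α) {c ξ : ℝ} (hc : 0 < c) (hl : -(α + 1) * c ^ α < l)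
    (hξ : c ≤ ξ) : 0 < phaseDeriv α l ξ := by
  have := Real.rpow_le_rpow hc.le hξ hα
  unfold phaseDeriv
  nlinarith

theorem exists_pos_mul_rpow_le_phaseDeriv (hα : 0 ≤ α) {c L : ℝ} (hc : 0 < c)
    (hL : -(α + 1) * c ^ α < L) :
    ∃ K > 0, ∀ l ≥ L, ∀ ξ ≥ c, K * ξ ^ α ≤ phaseDeriv α l ξ := by
  have hcα : 0 < c ^ α := Real.rpow_pos_of_pos hc α
  set K := min ((L + (α + 1) * c ^ α) / c ^ α) (α + 1)
  have hKc : K * c ^ α ≤ L + (α + 1) * c ^ α := (le_div_iff₀ hcα).1 (min_le_left _ _)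
  refine ⟨K, lt_min (div_pos (by linarith) hcα) (by linarith), fun l hl ξ hξ => ?_⟩
  have h := mul_le_mul_of_nonneg_left (Real.rpow_le_rpow hc.le hξ hα)
    (sub_nonneg.2 (min_le_right _ _) : 0 ≤ α + 1 - K)
  unfold phaseDeriv
  nlinarith

theorem abs_amp_le {K ξ : ℝ} (hξ : 0 < ξ) (hK : 0 < K) (hq : K * ξ ^ α ≤ phaseDeriv α l ξ) :
    |amp α β l ξ| ≤ K⁻¹ * ξ ^ (β - α) := by
  have hKξ : 0 < K * ξ ^ α := mul_pos hK (Real.rpow_pos_of_pos hξ α)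
  calc |amp α β l ξ| = ξ ^ β / phaseDeriv α l ξ := by
        rw [amp, abs_div, abs_of_pos (Real.rpow_pos_of_pos hξ β), abs_of_pos (hKξ.trans_le hq)]
    _ ≤ ξ ^ β / (K * ξ ^ α) := by gcongr
    _ = K⁻¹ * ξ ^ (β - α) := by rw [Real.rpow_sub hξ]; field_simp

theorem abs_ampDeriv_le (hα : 0 ≤ α) {K ξ : ℝ} (hξ : 0 < ξ) (hK : 0 < K)
    (hq : K * ξ ^ α ≤ phaseDeriv α l ξ) :
    |ampDeriv α β l ξ| ≤ (|β| / K + (α + 1) * α / K ^ 2) * ξ ^ (β - 1 - α) := by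
  have hKξ : 0 < K * ξ ^ α := mul_pos hK (Real.rpow_pos_of_pos hξ α)
  have hq0 : 0 < phaseDeriv α l ξ := hKξ.trans_le hq
  have h1 : 0 ≤ ξ ^ (β - 1) := (Real.rpow_pos_of_pos hξ _).le
  have h2 : 0 ≤ ξ ^ β * ((α + 1) * (α * ξ ^ (α - 1))) := by
    have := Real.rpow_pos_of_pos hξ β; have := Real.rpow_pos_of_pos hξ (α - 1); positivity
  have hsplit : ampDeriv α β l ξ = β * ξ ^ (β - 1) / phaseDeriv α l ξ
      - ξ ^ β * ((α + 1) * (α * ξ ^ (α - 1))) / phaseDeriv α l ξ ^ 2 := by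
    rw [ampDeriv]; field_simp
  calc |ampDeriv α β l ξ|
      ≤ |β * ξ ^ (β - 1) / phaseDeriv α l ξ|
          + |ξ ^ β * ((α + 1) * (α * ξ ^ (α - 1))) / phaseDeriv α l ξ ^ 2| := by
        rw [hsplit]; exact abs_sub _ _
    _ = |β| * ξ ^ (β - 1) / phaseDeriv α l ξ
          + ξ ^ β * ((α + 1) * (α * ξ ^ (α - 1))) / phaseDeriv α l ξ ^ 2 := by
        rw [abs_div, abs_div, abs_mul, abs_of_nonneg h1, abs_of_nonneg h2, abs_of_pos hq0,
          abs_of_pos (pow_pos hq0 2)]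
    _ ≤ |β| * ξ ^ (β - 1) / (K * ξ ^ α)
          + ξ ^ β * ((α + 1) * (α * ξ ^ (α - 1))) / (K * ξ ^ α) ^ 2 := by
        gcongr
    _ = (|β| / K + (α + 1) * α / K ^ 2) * ξ ^ (β - 1 - α) := by
        simp only [Real.rpow_sub hξ, Real.rpow_one]
        field_simp

theorem exists_norm_remainder_le (hα : 0 ≤ α) {c L : ℝ} (hc : 0 < c)
    (hL : -(α + 1) * c ^ α < L) :
    ∃ C, ∀ l ≥ L, ∀ ξ ≥ c, ‖remainder α β l ξ‖ ≤ C * ξ ^ (β - 1 - α) := by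
  obtain ⟨K, hK, hq⟩ := exists_pos_mul_rpow_le_phaseDeriv hα hc hL
  refine ⟨|β| / K + (α + 1) * α / K ^ 2, fun l hl ξ hξ => ?_⟩
  rw [remainder, norm_neg_I_mul_mul_cexp]
  exact abs_ampDeriv_le hα (hc.trans_le hξ) hK (hq l hl ξ hξ)

theorem continuousAt_remainder {l ξ : ℝ} (hξ : 0 < ξ) (hq : phaseDeriv α l ξ ≠ 0) :
    ContinuousAt (fun p : ℝ × ℝ => remainder α β p.1 p.2) (l, ξ) := by
  unfold remainder ampDeriv phase
  unfold phaseDeriv at hq ⊢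
  fun_prop (disch := first | exact Or.inl hξ.ne' | exact pow_ne_zero 2 hq)

theorem continuousAt_boundaryTerm {l ξ : ℝ} (hq : phaseDeriv α l ξ ≠ 0) :
    ContinuousAt (fun l => boundaryTerm α β l ξ) l := by
  unfold boundaryTerm amp phase
  unfold phaseDeriv at hq ⊢
  fun_prop (disch := exact hq)

theorem integrableOn_remainder (hα : 0 ≤ α) (hβ : β < α) {c : ℝ} (hc : 0 < c)
    (hl : -(α + 1) * c ^ α < l) : IntegrableOn (remainder α β l) (Ioi c) := by
  obtain ⟨C, hC⟩ := exists_norm_remainder_le (β := β) hα hc hl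
  have hmajor := (integrableOn_Ioi_rpow_of_lt (a := β - 1 - α) (by linarith) hc).const_mul C
  refine Integrable.mono' hmajor ?_ ?_
  · refine ContinuousOn.aestronglyMeasurable (fun ξ hξ => ?_) measurableSet_Ioi
    have hξ0 : 0 < ξ := hc.trans hξ
    exact ((continuousAt_remainder hξ0 (phaseDeriv_pos hα hc hl hξ.le).ne').comp
      (f := fun ξ => (l, ξ)) (by fun_prop)).continuousWithinAt
  · exact (ae_restrict_iff' measurableSet_Ioi).2
      (ae_of_all _ fun ξ hξ => hC l le_rfl ξ (le_of_lt hξ))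

theorem tendsto_boundaryTerm_atTop (hα : 0 ≤ α) (hβ : β < α) {c : ℝ} (hc : 0 < c)
    (hl : -(α + 1) * c ^ α < l) : Tendsto (boundaryTerm α β l) atTop (𝓝 0) := by
  obtain ⟨K, hK, hq⟩ := exists_pos_mul_rpow_le_phaseDeriv hα hc hl
  have hmajor : Tendsto (fun R : ℝ => K⁻¹ * R ^ (β - α)) atTop (𝓝 0) := by
    simpa [neg_sub] using (tendsto_rpow_neg_atTop (sub_pos.2 hβ)).const_mul K⁻¹
  refine squeeze_zero_norm' ?_ hmajor
  filter_upwards [eventually_ge_atTop c] with R hR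
  rw [boundaryTerm, norm_neg_I_mul_mul_cexp]
  exact abs_amp_le (hc.trans_le hR) hK (hq l le_rfl R hR)

theorem tendsto_intervalIntegral_tail (hα : 0 ≤ α) (hβ : β < α) {c : ℝ} (hc : 0 < c)
    (hl : -(α + 1) * c ^ α < l) :
    Tendsto (fun R => ∫ ξ in c..R, ((ξ ^ β : ℝ) : ℂ) * exp (I * phase α l ξ)) atTop
      (𝓝 (tail α β c l)) := by
  refine tendsto_intervalIntegral_of_hasDerivAt_add
    (fun ξ hξ => hasDerivAt_boundaryTerm (hc.trans_le hξ) (phaseDeriv_pos hα hc hl hξ).ne')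
    ?_ (integrableOn_remainder hα hβ hc hl) (tendsto_boundaryTerm_atTop hα hβ hc hl)
  intro ξ hξ
  unfold phase
  exact ContinuousAt.continuousWithinAt (by fun_prop (disch := exact Or.inl (hc.trans_le hξ).ne'))

theorem continuousOn_tail (hα : 0 ≤ α) (hβ : β < α) {c : ℝ} (hc : 0 < c) :
    ContinuousOn (tail α β c) {l | -(α + 1) * c ^ α < l} := by
  intro l₀ (hl₀ : -(α + 1) * c ^ α < l₀)
  refine ContinuousAt.continuousWithinAt ?_
  obtain ⟨L, hL, hLl₀⟩ := exists_between hl₀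
  obtain ⟨C, hC⟩ := exists_norm_remainder_le (β := β) hα hc hL
  have hnear : ∀ᶠ l in 𝓝 l₀, L < l := lt_mem_nhds hLl₀
  refine (continuousAt_boundaryTerm (phaseDeriv_pos hα hc hl₀ le_rfl).ne').neg.sub ?_
  refine continuousAt_of_dominated ?_ ?_
    ((integrableOn_Ioi_rpow_of_lt (a := β - 1 - α) (by linarith) hc).const_mul C) ?_
  · filter_upwards [hnear] with l hl
    exact (integrableOn_remainder hα hβ hc (hL.trans hl)).aestronglyMeasurable
  · filter_upwards [hnear] with l hl
    exact (ae_restrict_iff' measurableSet_Ioi).2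
      (ae_of_all _ fun ξ hξ => hC l hl.le ξ (le_of_lt hξ))
  · refine (ae_restrict_iff' measurableSet_Ioi).2 (ae_of_all _ fun ξ hξ => ?_)
    exact (continuousAt_remainder (hc.trans hξ) (phaseDeriv_pos hα hc hl₀ hξ.le).ne').comp
      (f := fun l => (l, ξ)) (by fun_prop)

end OscillatoryIntegral

open OscillatoryIntegral

theorem oscillatory_tail_exists_continuous (α c : ℝ) (hα : 1 / 2 < α) (hc : 0 < c) :
    ∃ h : ℝ → ℂ,
      (∀ l : ℝ, -(α + 1) * c ^ α < l →
        Tendsto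
          (fun R : ℝ => ∫ ξ in c..R,
            ((ξ ^ (2⁻¹ : ℝ) : ℝ) : ℂ) *
              Complex.exp (Complex.I * ((l * ξ + ξ ^ (α + 1) : ℝ) : ℂ)))
          atTop (nhds (h l))) ∧
      ContinuousOn h {l : ℝ | -(α + 1) * c ^ α < l} := by
  have hα₀ : 0 ≤ α := by linarith
  have hβ : (2⁻¹ : ℝ) < α := by linarith
  exact ⟨tail α 2⁻¹ c,
    fun l hl => tendsto_intervalIntegral_tail hα₀ hβ hc hl,
    continuousOn_tail hα₀ hβ hc⟩
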